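/- arXiv:0711.2869 — 4 statements merged into one kernel-verified Lean document; each statement's English description precedes it below -/
import Mathlib

section
/- Let U be a monotone unitary family on ℝ acting on a finite-dimensional complex inner product space V of dimension M ≥ 1, satisfying dmin·‖φ‖² ≤ ⟨D(x)φ,φ⟩ for all x and φ, and ‖U''(x)‖ ≤ d₂ for all x, where dmin, d₂ > 0. Let I ⊆ ℝ be an interval of length at most 2·dmin/(d₂·M). Then the subspaces W(x) = ker(I − U(x)) for x ∈ I are linearly independent: if S ⊆ I ∩ Z is a finite set, φ_x ∈ W(x) for each x ∈ S, and Σ_{x ∈ S} φ_x = 0, then φ_x = 0 for all x ∈ S. -/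
/-!
A relation `∑ ψ p = 0` with more than `M + 1` nonzero terms contains, among any `M + 1` of them,
a linear dependency, which is a shorter relation of the same kind; so it suffices to rule out
relations whose support `T ⊆ I` has at most `M + 1` points, all `ψ p ≠ 0`.

As `U q` fixes `ψ q` and `U p` fixes `ψ p`, the first-order Taylor expansion of `U` at `p` gives
`‖⟪U' p (ψ p), ψ q⟫‖ ≤ d₂/2 |q - p| ‖ψ p‖ ‖ψ q‖`. Pairing the relation with `D p (ψ p)` then gives
`dmin ‖ψ p‖ ≤ d₂/2 ∑_{q ≠ p} |q - p| ‖ψ q‖`, and since `|q - p| ≤ 2 dmin / (d₂ M)` this is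
`(M + 1) ‖ψ p‖ ≤ ∑_q ‖ψ q‖`. Summing over `p` forces `|T| ≥ M + 1`, strictly if `|T| ≥ 3`
(some point of `T` is then closer than the diameter bound to the largest one).

This leaves `M = 1` and two points `p < q` of `I` at which `U` fixes the same `ψ ≠ 0`. In a complex
line `U t ψ = e^{iθ(t)} ψ` with `dmin ≤ θ' ≤ √d₂`, the upper bound because a curve on a sphere has
`‖γ'‖² ≤ ‖γ‖ ‖γ''‖`. Hence `θ q - θ p ∈ 2πℤ` is positive, so `2π ≤ √d₂ (q - p)`, contradicting
`q - p ≤ 2 dmin / d₂ ≤ 2 / √d₂`.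
-/

open scoped InnerProductSpace
open Real

theorem norm_sub_sub_smul_le_of_le {E : Type*} [NormedAddCommGroup E] [NormedSpace ℝ E]
    {f f' f'' : ℝ → E} {C : ℝ} (hf : ∀ t, HasDerivAt f (f' t) t)
    (hf' : ∀ t, HasDerivAt f' (f'' t) t) (hC : ∀ t, ‖f'' t‖ ≤ C) {x y : ℝ} (hxy : x ≤ y) :
    ‖f y - f x - (y - x) • f' x‖ ≤ C / 2 * (y - x) ^ 2 := by
  have hg : ∀ t, HasDerivAt (fun t => f t - f x - (t - x) • f' x) (f' t - f' x) t := fun t =>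
    (((hf t).sub_const (f x)).sub
      (((hasDerivAt_id t).sub_const x).smul_const (f' x))).congr_deriv (by simp)
  have hB : ∀ t, HasDerivAt (fun t => C / 2 * (t - x) ^ 2) (C * (t - x)) t := fun t =>
    ((((hasDerivAt_id' t).sub_const x).fun_pow 2).const_mul (C / 2)).congr_deriv (by ring)
  refine image_norm_le_of_norm_deriv_right_le_deriv_boundary
    (fun t _ => (hg t).continuousAt.continuousWithinAt) (fun t _ => (hg t).hasDerivWithinAt)
    (by simp) hB (fun t ht => ?_) ⟨hxy, le_rfl⟩
  have := Convex.norm_image_sub_le_of_norm_hasDerivWithin_le (fun t _ => (hf' t).hasDerivWithinAt)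
    (fun t _ => hC t) convex_univ (Set.mem_univ x) (Set.mem_univ t)
  rwa [Real.norm_of_nonneg (sub_nonneg.mpr ht.1)] at this

theorem norm_sub_sub_smul_le {E : Type*} [NormedAddCommGroup E] [NormedSpace ℝ E]
    {f f' f'' : ℝ → E} {C : ℝ} (hf : ∀ t, HasDerivAt f (f' t) t)
    (hf' : ∀ t, HasDerivAt f' (f'' t) t) (hC : ∀ t, ‖f'' t‖ ≤ C) (x y : ℝ) :
    ‖f y - f x - (y - x) • f' x‖ ≤ C / 2 * (y - x) ^ 2 := by
  rcases le_total x y with hxy | hyx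
  · exact norm_sub_sub_smul_le_of_le hf hf' hC hxy
  · have hreflect : ∀ {g g' : ℝ → E}, (∀ t, HasDerivAt g (g' t) t) →
        ∀ t, HasDerivAt (fun t => g (-t)) (-g' (-t)) t := fun hg t => by
      simpa [Function.comp_def] using (hg (-t)).scomp t (hasDerivAt_neg t)
    have := norm_sub_sub_smul_le_of_le (hreflect hf)
      (fun t => by simpa using (hreflect hf' t).fun_neg) (fun t => hC (-t)) (neg_le_neg hyx)
    rwa [neg_neg, neg_neg, show (-y - -x) • -f' x = (y - x) • f' x by module,
      show (-y - -x) ^ 2 = (y - x) ^ 2 by ring] at this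

theorem re_inner_deriv_eq_zero_of_norm_eq {𝕜 E : Type*} [RCLike 𝕜] [NormedAddCommGroup E]
    [InnerProductSpace 𝕜 E] [NormedSpace ℝ E] {f f' : ℝ → E} {r : ℝ}
    (hf : ∀ t, HasDerivAt f (f' t) t) (hr : ∀ t, ‖f t‖ = r) (t : ℝ) :
    RCLike.re ⟪f t, f' t⟫_𝕜 = 0 := by
  have hconst : (fun s => ⟪f s, f s⟫_𝕜) = fun _ => ((r ^ 2 : ℝ) : 𝕜) := by
    funext s; rw [inner_self_eq_norm_sq_to_K, hr]; norm_cast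
  have hderiv := (hf t).inner 𝕜 (hf t)
  rw [hconst] at hderiv
  have h0 := congrArg RCLike.re ((hasDerivAt_const t _).unique hderiv)
  rw [← inner_conj_symm (f' t), map_add, RCLike.conj_re, map_zero] at h0
  linarith

theorem norm_deriv_sq_le_of_norm_eq {𝕜 E : Type*} [RCLike 𝕜] [NormedAddCommGroup E]
    [InnerProductSpace 𝕜 E] [NormedSpace ℝ E] {f f' f'' : ℝ → E} {r : ℝ}
    (hf : ∀ t, HasDerivAt f (f' t) t) (hf' : ∀ t, HasDerivAt f' (f'' t) t)
    (hr : ∀ t, ‖f t‖ = r) (t : ℝ) : ‖f' t‖ ^ 2 ≤ r * ‖f'' t‖ := by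
  have hderiv := (RCLike.reCLM.hasFDerivAt.comp_hasDerivAt t ((hf t).inner 𝕜 (hf' t)))
  have hconst : (RCLike.reCLM ∘ fun s => ⟪f s, f' s⟫_𝕜) = fun _ => 0 := by
    funext s; exact re_inner_deriv_eq_zero_of_norm_eq hf hr s
  rw [hconst] at hderiv
  have h0 := (hasDerivAt_const t (0:ℝ)).unique hderiv
  simp only [RCLike.reCLM_apply, map_add] at h0
  calc ‖f' t‖ ^ 2 = RCLike.re ⟪f' t, f' t⟫_𝕜 := by rw [inner_self_eq_norm_sq]
    _ = - RCLike.re ⟪f t, f'' t⟫_𝕜 := by linarith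
    _ ≤ ‖⟪f t, f'' t⟫_𝕜‖ := (neg_le_abs _).trans (RCLike.abs_re_le_norm _)
    _ ≤ r * ‖f'' t‖ := (norm_inner_le_norm _ _).trans_eq (by rw [hr])

theorem eq_I_mul_smul_of_norm_eq {E : Type*} [NormedAddCommGroup E] [InnerProductSpace ℂ E]
    (hdim : Module.finrank ℂ E = 1) {v v' : ℝ → E} {r : ℝ} (hv : ∀ t, HasDerivAt v (v' t) t)
    (hr : ∀ t, ‖v t‖ = r) (hr0 : r ≠ 0) (t : ℝ) :
    v' t = (Complex.I * ((⟪v t, v' t⟫_ℂ).im / r ^ 2 : ℝ)) • v t := by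
  have hvt : v t ≠ 0 := by rw [← norm_ne_zero_iff, hr]; exact hr0
  obtain ⟨c, hc⟩ := exists_smul_eq_of_finrank_eq_one hdim hvt (v' t)
  have hinner : ⟪v t, v' t⟫_ℂ = c * (r ^ 2 : ℝ) := by
    rw [← hc, inner_smul_right, inner_self_eq_norm_sq_to_K, hr]; push_cast; rfl
  have hre : c.re = 0 := by
    have := re_inner_deriv_eq_zero_of_norm_eq (𝕜 := ℂ) hv hr t
    rw [RCLike.re_to_complex, hinner, Complex.re_mul_ofReal] at this
    exact (mul_eq_zero.mp this).resolve_right (by positivity)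
  rw [hinner, Complex.im_mul_ofReal, mul_div_cancel_right₀ _ (by positivity), ← hc]
  congr 1
  apply Complex.ext <;> simp [hre]

theorem exists_int_integral_eq_two_pi_mul {E : Type*} [NormedAddCommGroup E] [NormedSpace ℂ E]
    {v : ℝ → E} {a : ℝ → ℝ} (ha : Continuous a)
    (hv : ∀ t, HasDerivAt v ((Complex.I * a t) • v t) t) {p q : ℝ} (hpq : v p = v q)
    (hq : v q ≠ 0) : ∃ k : ℤ, ∫ t in p..q, a t = 2 * π * k := by
  set θ : ℝ → ℝ := fun t => ∫ s in p..t, a s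
  have hθ : ∀ t, HasDerivAt θ (a t) t := fun t => (ha.integral_hasStrictDerivAt p t).hasDerivAt
  set w : ℝ → E := fun t => Complex.exp (-(Complex.I * θ t)) • v t
  have hw : ∀ t, HasDerivAt w 0 t := by
    intro t
    have hexp : HasDerivAt (fun s => Complex.exp (-(Complex.I * θ s)))
        (Complex.exp (-(Complex.I * θ t)) * -(Complex.I * a t)) t :=
      ((hθ t).ofReal_comp.const_mul Complex.I).neg.cexp
    refine (hexp.smul (hv t)).congr_deriv ?_
    rw [smul_smul, ← add_smul, mul_neg, add_neg_cancel, zero_smul]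
  have hwpq : w q = w p :=
    is_const_of_deriv_eq_zero (fun t => (hw t).differentiableAt) (fun t => (hw t).deriv) q p
  have hexp : Complex.exp (-(Complex.I * θ q)) = 1 := by
    refine smul_left_injective ℂ hq ?_
    simpa [w, θ, hpq] using hwpq
  obtain ⟨n, hn⟩ := Complex.exp_eq_one_iff.mp hexp
  refine ⟨-n, ?_⟩
  have : ((θ q : ℝ) : ℂ) = ((2 * π * (-n : ℤ) : ℝ) : ℂ) := by
    apply mul_left_cancel₀ Complex.I_ne_zero
    push_cast
    linear_combination -hn
  exact_mod_cast this

theorem HasDerivAt.clm_apply_const {𝕜 E F : Type*} [NontriviallyNormedField 𝕜] [NormedAlgebra ℝ 𝕜]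
    [NormedAddCommGroup E] [NormedSpace 𝕜 E] [NormedAddCommGroup F] [NormedSpace 𝕜 F]
    [NormedSpace ℝ F] [IsScalarTower ℝ 𝕜 F]
    {c : ℝ → E →L[𝕜] F} {c' : E →L[𝕜] F} {t : ℝ} (hc : HasDerivAt c c' t) (u : E) :
    HasDerivAt (fun s => c s u) (c' u) t :=
  ((ContinuousLinearMap.apply 𝕜 F u).restrictScalars ℝ).hasFDerivAt.comp_hasDerivAt t hc

section Combinatorics

variable {T : Finset ℝ} {w : ℝ → ℝ} {M L : ℝ}

theorem add_one_mul_le_sum (hw : ∀ q ∈ T, 0 ≤ w q) (hL : 0 < L)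
    (hdiam : ∀ p ∈ T, ∀ q ∈ T, |q - p| ≤ L) {p : ℝ} (hp : p ∈ T)
    (hbound : M * L * w p ≤ ∑ q ∈ T.erase p, |q - p| * w q) :
    (M + 1) * w p ≤ ∑ q ∈ T, w q := by
  have hsum : ∑ q ∈ T.erase p, |q - p| * w q ≤ L * (∑ q ∈ T, w q - w p) := by
    rw [← Finset.sum_erase_eq_sub hp, Finset.mul_sum]
    exact Finset.sum_le_sum fun q hq => mul_le_mul_of_nonneg_right
      (hdiam p hp q (Finset.mem_of_mem_erase hq)) (hw q (Finset.mem_of_mem_erase hq))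
  exact le_of_mul_le_mul_left (by linarith) hL

theorem add_one_mul_lt_sum (hw : ∀ q ∈ T, 0 ≤ w q) (hL : 0 < L)
    (hdiam : ∀ p ∈ T, ∀ q ∈ T, |q - p| ≤ L) {p r : ℝ} (hp : p ∈ T) (hr : r ∈ T.erase p)
    (hrp : |r - p| < L) (hwr : 0 < w r)
    (hbound : M * L * w p ≤ ∑ q ∈ T.erase p, |q - p| * w q) :
    (M + 1) * w p < ∑ q ∈ T, w q := by
  have hsum : ∑ q ∈ T.erase p, |q - p| * w q < L * (∑ q ∈ T, w q - w p) := by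
    rw [← Finset.sum_erase_eq_sub hp, Finset.mul_sum]
    exact Finset.sum_lt_sum (fun q hq => mul_le_mul_of_nonneg_right
      (hdiam p hp q (Finset.mem_of_mem_erase hq)) (hw q (Finset.mem_of_mem_erase hq)))
      ⟨r, hr, mul_lt_mul_of_pos_right hrp hwr⟩
  exact lt_of_mul_lt_mul_left (by linarith) hL.le

theorem add_one_le_card_of_forall_mul_le_sum (hT : T.Nonempty) (hw : ∀ p ∈ T, 0 < w p)
    (hL : 0 < L) (hdiam : ∀ p ∈ T, ∀ q ∈ T, |q - p| ≤ L)
    (hbound : ∀ p ∈ T, M * L * w p ≤ ∑ q ∈ T.erase p, |q - p| * w q) :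
    M + 1 ≤ T.card := by
  have hle : (M + 1) * ∑ p ∈ T, w p ≤ T.card * ∑ p ∈ T, w p :=
    calc (M + 1) * ∑ p ∈ T, w p = ∑ p ∈ T, (M + 1) * w p := Finset.mul_sum _ _ _
      _ ≤ ∑ _p ∈ T, ∑ q ∈ T, w q := Finset.sum_le_sum fun p hp =>
          add_one_mul_le_sum (fun q hq => (hw q hq).le) hL hdiam hp (hbound p hp)
      _ = T.card * ∑ p ∈ T, w p := by rw [Finset.sum_const, nsmul_eq_mul]
  exact le_of_mul_le_mul_right hle (Finset.sum_pos hw hT)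

theorem card_le_two_of_forall_mul_le_sum (hw : ∀ p ∈ T, 0 < w p) (hL : 0 < L)
    (hdiam : ∀ p ∈ T, ∀ q ∈ T, |q - p| ≤ L)
    (hbound : ∀ p ∈ T, M * L * w p ≤ ∑ q ∈ T.erase p, |q - p| * w q)
    (hcard : T.card ≤ M + 1) : T.card ≤ 2 := by
  by_contra! h3
  have hT : T.Nonempty := Finset.card_pos.mp (by omega)
  set p := T.max' hT
  have hp : p ∈ T := T.max'_mem hT
  obtain ⟨a, ha, b, hb, hab⟩ := Finset.one_lt_card.mp
    (show 1 < (T.erase p).card by rw [Finset.card_erase_of_mem hp]; omega)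
  have hr : max a b ∈ T.erase p := by rcases max_choice a b with h | h <;> rw [h] <;> assumption
  have hrp : |max a b - p| < L := by
    have hmin : |min a b - p| ≤ L := hdiam p hp _ (by
      rcases min_choice a b with h | h <;> rw [h] <;> exact Finset.mem_of_mem_erase ‹_›)
    have hmax : max a b ≤ p := T.le_max' _ (Finset.mem_of_mem_erase hr)
    have hlt : min a b < max a b := min_lt_max.mpr hab
    rw [abs_of_nonpos (by linarith)] at hmin
    rw [abs_of_nonpos (by linarith)]
    linarith
  have hlt : (M + 1) * ∑ q ∈ T, w q < T.card * ∑ q ∈ T, w q :=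
    calc (M + 1) * ∑ q ∈ T, w q = ∑ q ∈ T, (M + 1) * w q := Finset.mul_sum _ _ _
      _ < ∑ _q ∈ T, ∑ q ∈ T, w q := Finset.sum_lt_sum
          (fun q hq => add_one_mul_le_sum (fun q hq => (hw q hq).le) hL hdiam hq (hbound q hq))
          ⟨p, hp, add_one_mul_lt_sum (fun q hq => (hw q hq).le) hL hdiam hp hr hrp
            (hw _ (Finset.mem_of_mem_erase hr)) (hbound p hp)⟩
      _ = T.card * ∑ q ∈ T, w q := by rw [Finset.sum_const, nsmul_eq_mul]
  have := lt_of_mul_lt_mul_right hlt (Finset.sum_nonneg fun q hq => (hw q hq).le)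
  linarith

end Combinatorics

theorem eq_zero_of_sum_eq_zero_of_forall_card_le {K V ι : Type*} [Field K] [AddCommGroup V]
    [Module K V] [FiniteDimensional K V] {W : ι → Submodule K V} {S : Finset ι}
    (h : ∀ T ⊆ S, T.card ≤ Module.finrank K V + 1 → ∀ ψ : ι → V, (∀ x ∈ T, ψ x ∈ W x) →
      (∀ x ∈ T, ψ x ≠ 0) → ∑ x ∈ T, ψ x = 0 → T = ∅)
    {φ : ι → V} (hφ : ∀ x ∈ S, φ x ∈ W x) (hsum : ∑ x ∈ S, φ x = 0) : ∀ x ∈ S, φ x = 0 := by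
  classical
  set S' := S.filter (φ · ≠ 0)
  suffices hS' : S' = ∅ by
    intro x hx
    by_contra hx0
    exact Finset.notMem_empty x (hS' ▸ Finset.mem_filter.mpr ⟨hx, hx0⟩)
  by_cases hcard : S'.card ≤ Module.finrank K V + 1
  · exact h S' (Finset.filter_subset _ _) hcard φ (fun x hx => hφ x (Finset.mem_filter.mp hx).1)
      (fun x hx => (Finset.mem_filter.mp hx).2) (by rwa [Finset.sum_filter_ne_zero])
  obtain ⟨T, hTS', hTcard⟩ := Finset.exists_subset_card_eq (not_le.mp hcard).le
  have hdep : ¬ LinearIndepOn K φ (T : Set ι) := fun hli => by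
    have := LinearIndependent.fintype_card_le_finrank hli
    simp only [Finset.coe_sort_coe, Fintype.card_coe, hTcard] at this
    omega
  simp only [linearIndepOn_iff', not_forall] at hdep
  obtain ⟨t, g, htT, hgt, i, hit, hgi⟩ := hdep
  have htS : ∀ x ∈ t, x ∈ S := fun x hx => Finset.filter_subset _ _ (hTS' (htT hx))
  have hempty := h (t.filter fun x => g x • φ x ≠ 0)
    (fun x hx => htS x (Finset.mem_filter.mp hx).1)
    ((Finset.card_le_card (Finset.filter_subset _ _)).trans
      ((Finset.card_le_card fun x hx => htT hx).trans hTcard.le))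
    (fun x => g x • φ x)
    (fun x hx => (W x).smul_mem _ (hφ x (htS x (Finset.mem_filter.mp hx).1)))
    (fun x hx => (Finset.mem_filter.mp hx).2) (by rwa [Finset.sum_filter_ne_zero])
  exact (Finset.notMem_empty i (hempty ▸ Finset.mem_filter.mpr
    ⟨hit, smul_ne_zero hgi (Finset.mem_filter.mp (hTS' (htT hit))).2⟩)).elim

theorem mem_ker_one_sub_iff {𝕜 E : Type*} [NontriviallyNormedField 𝕜] [NormedAddCommGroup E]
    [NormedSpace 𝕜 E] {A : E →L[𝕜] E} {φ : E} :
    φ ∈ LinearMap.ker ((1 - A : E →L[𝕜] E) : E →ₗ[𝕜] E) ↔ A φ = φ := by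
  rw [LinearMap.mem_ker, ContinuousLinearMap.coe_coe, sub_apply, sub_eq_zero,
    one_apply_eq_self, eq_comm]

section UnitaryFamily

variable {V : Type*} [NormedAddCommGroup V] [InnerProductSpace ℂ V] [CompleteSpace V]
  {U U' U'' D : ℝ → V →L[ℂ] V} {dmin d₂ : ℝ}

theorem abs_sub_mul_norm_inner_deriv_le {x y : ℝ} (hUy : U y ∈ unitary (V →L[ℂ] V))
    (hU' : ∀ t, HasDerivAt U (U' t) t) (hU'' : ∀ t, HasDerivAt U' (U'' t) t)
    (hupper : ∀ t, ‖U'' t‖ ≤ d₂) {φ ψ : V} (hφ : U x φ = φ) (hψ : U y ψ = ψ) :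
    |y - x| * ‖⟪U' x φ, ψ⟫_ℂ‖ ≤ d₂ / 2 * (y - x) ^ 2 * (‖φ‖ * ‖ψ‖) := by
  set R := U y - U x - (y - x) • U' x
  have hR : ⟪R φ, ψ⟫_ℂ = -((y - x : ℝ) * ⟪U' x φ, ψ⟫_ℂ) := by
    have hUyφ : ⟪U y φ, ψ⟫_ℂ = ⟪φ, ψ⟫_ℂ := by
      conv_lhs => rw [← hψ]
      exact ContinuousLinearMap.inner_map_map_of_mem_unitary hUy φ ψ
    simp only [R, sub_apply, smul_apply, inner_sub_left,
      hUyφ, hφ, ← Complex.coe_smul, inner_smul_left, Complex.conj_ofReal]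
    ring
  calc |y - x| * ‖⟪U' x φ, ψ⟫_ℂ‖ = ‖⟪R φ, ψ⟫_ℂ‖ := by
        rw [hR, norm_neg, norm_mul, Complex.norm_real, Real.norm_eq_abs]
    _ ≤ ‖R‖ * ‖φ‖ * ‖ψ‖ := (norm_inner_le_norm _ _).trans
        (mul_le_mul_of_nonneg_right (R.le_opNorm φ) (norm_nonneg _))
    _ ≤ d₂ / 2 * (y - x) ^ 2 * ‖φ‖ * ‖ψ‖ := by
        gcongr
        exact norm_sub_sub_smul_le hU' hU'' hupper x y
    _ = _ := by ring

theorem D_apply_apply_self (hunit : ∀ t, U t ∈ unitary (V →L[ℂ] V))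
    (hD : ∀ t, D t = Complex.I⁻¹ • (U' t ∘L star (U t))) (t : ℝ) (φ : V) :
    D t (U t φ) = Complex.I⁻¹ • U' t φ := by
  rw [hD, smul_apply, ContinuousLinearMap.comp_apply, ← mul_apply_eq_comp (star (U t)),
    Unitary.star_mul_self_of_mem (hunit t), one_apply_eq_self]

theorem norm_inner_D_apply_le (hunit : ∀ t, U t ∈ unitary (V →L[ℂ] V))
    (hU' : ∀ t, HasDerivAt U (U' t) t) (hU'' : ∀ t, HasDerivAt U' (U'' t) t)
    (hD : ∀ t, D t = Complex.I⁻¹ • (U' t ∘L star (U t))) (hupper : ∀ t, ‖U'' t‖ ≤ d₂)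
    {x y : ℝ} (hxy : x ≠ y) {φ ψ : V} (hφ : U x φ = φ) (hψ : U y ψ = ψ) :
    ‖⟪D x φ, ψ⟫_ℂ‖ ≤ d₂ / 2 * |y - x| * (‖φ‖ * ‖ψ‖) := by
  have hpos : 0 < |y - x| := abs_pos.mpr (sub_ne_zero.mpr hxy.symm)
  have key := abs_sub_mul_norm_inner_deriv_le (hunit y) hU' hU'' hupper hφ hψ
  rw [← sq_abs] at key
  conv_lhs => rw [← hφ, D_apply_apply_self hunit hD]
  rw [inner_smul_left, norm_mul, RCLike.norm_conj, norm_inv, Complex.norm_I, inv_one, one_mul]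
  exact le_of_mul_le_mul_left (by linarith) hpos

theorem mul_norm_le_sum_abs_sub_mul_norm (hunit : ∀ t, U t ∈ unitary (V →L[ℂ] V))
    (hU' : ∀ t, HasDerivAt U (U' t) t) (hU'' : ∀ t, HasDerivAt U' (U'' t) t)
    (hD : ∀ t, D t = Complex.I⁻¹ • (U' t ∘L star (U t)))
    (hlower : ∀ t, ∀ φ : V, dmin * ‖φ‖ ^ 2 ≤ (⟪D t φ, φ⟫_ℂ).re) (hupper : ∀ t, ‖U'' t‖ ≤ d₂)
    {T : Finset ℝ} {ψ : ℝ → V} (hψ : ∀ p ∈ T, U p (ψ p) = ψ p) (hsum : ∑ p ∈ T, ψ p = 0)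
    {p : ℝ} (hp : p ∈ T) :
    dmin * ‖ψ p‖ ≤ d₂ / 2 * ∑ q ∈ T.erase p, |q - p| * ‖ψ q‖ := by
  have hself : ⟪D p (ψ p), ψ p⟫_ℂ = -∑ q ∈ T.erase p, ⟪D p (ψ p), ψ q⟫_ℂ := by
    have h0 : ∑ q ∈ T, ⟪D p (ψ p), ψ q⟫_ℂ = 0 := by rw [← inner_sum, hsum, inner_zero_right]
    rw [← Finset.add_sum_erase T _ hp] at h0
    exact eq_neg_of_add_eq_zero_left h0
  have hsq : dmin * ‖ψ p‖ ^ 2 ≤ (d₂ / 2 * ∑ q ∈ T.erase p, |q - p| * ‖ψ q‖) * ‖ψ p‖ :=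
    calc dmin * ‖ψ p‖ ^ 2 ≤ (⟪D p (ψ p), ψ p⟫_ℂ).re := hlower p (ψ p)
      _ ≤ ‖∑ q ∈ T.erase p, ⟪D p (ψ p), ψ q⟫_ℂ‖ := by
          rw [hself]; exact (Complex.re_le_norm _).trans (norm_neg _).le
      _ ≤ ∑ q ∈ T.erase p, d₂ / 2 * |q - p| * (‖ψ p‖ * ‖ψ q‖) :=
          (norm_sum_le _ _).trans <| Finset.sum_le_sum fun q hq =>
            norm_inner_D_apply_le hunit hU' hU'' hD hupper (Finset.ne_of_mem_erase hq).symm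
              (hψ p hp) (hψ q (Finset.mem_of_mem_erase hq))
      _ = (d₂ / 2 * ∑ q ∈ T.erase p, |q - p| * ‖ψ q‖) * ‖ψ p‖ := by
          rw [Finset.mul_sum, Finset.sum_mul]
          exact Finset.sum_congr rfl fun q _ => by ring
  rcases (norm_nonneg (ψ p)).eq_or_lt with h0 | hpos
  · have hd₂ : 0 ≤ d₂ := (norm_nonneg _).trans (hupper 0)
    rw [← h0, mul_zero]
    exact mul_nonneg (by positivity) (Finset.sum_nonneg fun q _ => by positivity)
  · exact le_of_mul_le_mul_right (by linarith) hpos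

theorem re_inner_D_apply_apply_self (hunit : ∀ t, U t ∈ unitary (V →L[ℂ] V))
    (hD : ∀ t, D t = Complex.I⁻¹ • (U' t ∘L star (U t))) (t : ℝ) (ψ : V) :
    (⟪D t (U t ψ), U t ψ⟫_ℂ).re = (⟪U t ψ, U' t ψ⟫_ℂ).im := by
  rw [D_apply_apply_self hunit hD, inner_smul_left]
  simp only [Complex.inv_I, map_neg, Complex.conj_I, neg_neg, Complex.I_re, Complex.I_im,
    Complex.mul_re]
  rw [← inner_conj_symm (U' t ψ) (U t ψ), Complex.conj_im]
  ring

theorem norm_deriv_apply_le (hunit : ∀ t, U t ∈ unitary (V →L[ℂ] V))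
    (hU' : ∀ t, HasDerivAt U (U' t) t) (hU'' : ∀ t, HasDerivAt U' (U'' t) t)
    (hupper : ∀ t, ‖U'' t‖ ≤ d₂) (t : ℝ) (ψ : V) : ‖U' t ψ‖ ≤ √d₂ * ‖ψ‖ := by
  have hd₂ : 0 ≤ d₂ := (norm_nonneg _).trans (hupper 0)
  have hsq := norm_deriv_sq_le_of_norm_eq (𝕜 := ℂ) (fun t => (hU' t).clm_apply_const ψ)
    (fun t => (hU'' t).clm_apply_const ψ)
    (fun t => ContinuousLinearMap.norm_map_of_mem_unitary (hunit t) ψ) t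
  refine le_of_pow_le_pow_left₀ two_ne_zero (by positivity) ?_
  calc ‖U' t ψ‖ ^ 2 ≤ ‖ψ‖ * ‖U'' t ψ‖ := hsq
    _ ≤ ‖ψ‖ * (d₂ * ‖ψ‖) := by gcongr; exact (U'' t).le_of_opNorm_le (hupper t) ψ
    _ = (√d₂ * ‖ψ‖) ^ 2 := by rw [mul_pow, sq_sqrt hd₂]; ring

theorem lt_abs_sub_of_finrank_eq_one (hdim : Module.finrank ℂ V = 1)
    (hunit : ∀ t, U t ∈ unitary (V →L[ℂ] V))
    (hU' : ∀ t, HasDerivAt U (U' t) t) (hU'' : ∀ t, HasDerivAt U' (U'' t) t)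
    (hD : ∀ t, D t = Complex.I⁻¹ • (U' t ∘L star (U t))) (hdmin : 0 < dmin)
    (hlower : ∀ t, ∀ φ : V, dmin * ‖φ‖ ^ 2 ≤ (⟪D t φ, φ⟫_ℂ).re) (hupper : ∀ t, ‖U'' t‖ ≤ d₂)
    {ψ : V} (hψ : ψ ≠ 0) {p q : ℝ} (hpq : p ≠ q) (hp : U p ψ = ψ) (hq : U q ψ = ψ) :
    2 * dmin / d₂ < |q - p| := by
  wlog hlt : p < q generalizing p q
  · rw [abs_sub_comm]
    exact this hpq.symm hq hp (lt_of_le_of_ne (not_lt.mp hlt) hpq.symm)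
  -- `a = θ'` for `U t ψ = e^{iθ(t)} ψ`
  set a : ℝ → ℝ := fun t => (⟪U t ψ, U' t ψ⟫_ℂ).im / ‖ψ‖ ^ 2
  have hψpos : 0 < ‖ψ‖ := norm_pos_iff.mpr hψ
  have hcurve := fun t => (hU' t).clm_apply_const ψ
  have hnorm := fun t => ContinuousLinearMap.norm_map_of_mem_unitary (hunit t) ψ
  have hlow : ∀ t, dmin ≤ a t := fun t => by
    rw [le_div_iff₀ (by positivity), ← re_inner_D_apply_apply_self hunit hD, ← hnorm t]
    exact hlower t _
  have hup : ∀ t, a t ≤ √d₂ := fun t => by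
    rw [div_le_iff₀ (by positivity)]
    calc (⟪U t ψ, U' t ψ⟫_ℂ).im ≤ ‖U t ψ‖ * ‖U' t ψ‖ :=
          (Complex.im_le_norm _).trans (norm_inner_le_norm _ _)
      _ ≤ ‖ψ‖ * (√d₂ * ‖ψ‖) := by
          rw [hnorm]; gcongr; exact norm_deriv_apply_le hunit hU' hU'' hupper t ψ
      _ = √d₂ * ‖ψ‖ ^ 2 := by ring
  have ha : Continuous a := by
    have hv : Continuous fun t => U t ψ := continuous_iff_continuousAt.mpr fun t =>
      (hcurve t).continuousAt
    have hv' : Continuous fun t => U' t ψ := continuous_iff_continuousAt.mpr fun t =>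
      ((hU'' t).clm_apply_const ψ).continuousAt
    exact (Complex.continuous_im.comp (hv.inner hv')).div_const _
  obtain ⟨k, hint⟩ := exists_int_integral_eq_two_pi_mul ha
    (fun t => (hcurve t).congr_deriv (eq_I_mul_smul_of_norm_eq hdim hcurve hnorm hψpos.ne' t))
    (hp.trans hq.symm) (hq.trans_ne hψ)
  have hint_low : dmin * (q - p) ≤ ∫ t in p..q, a t := by
    simpa [mul_comm] using intervalIntegral.integral_mono_on (μ := MeasureTheory.volume) hlt.le
      intervalIntegrable_const (ha.intervalIntegrable p q) fun t _ => hlow t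
  have hint_up : ∫ t in p..q, a t ≤ √d₂ * (q - p) := by
    simpa [mul_comm] using intervalIntegral.integral_mono_on (μ := MeasureTheory.volume) hlt.le
      (ha.intervalIntegrable p q) intervalIntegrable_const fun t _ => hup t
  have hk : (1 : ℝ) ≤ k := by
    have : (0 : ℝ) < k := by nlinarith [pi_pos, mul_pos hdmin (sub_pos.mpr hlt)]
    exact_mod_cast (show (0 : ℤ) < k by exact_mod_cast this)
  have h2π : 2 * π ≤ √d₂ * (q - p) := by nlinarith [pi_pos]
  have hsqrt : dmin ≤ √d₂ := (hlow p).trans (hup p)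
  have hd₂ : d₂ = √d₂ ^ 2 := (sq_sqrt ((norm_nonneg _).trans (hupper 0))).symm
  rw [abs_of_pos (sub_pos.mpr hlt), div_lt_iff₀ (by nlinarith)]
  nlinarith [pi_gt_three, mul_le_mul_of_nonneg_right h2π (hdmin.le.trans hsqrt)]

end UnitaryFamily

theorem independence_of_eigenspaces_of_monotone_unitary_family_general
    {V : Type*} [NormedAddCommGroup V] [InnerProductSpace ℂ V] [FiniteDimensional ℂ V]
    (M : ℕ) (hM : 1 ≤ M) (hdim : Module.finrank ℂ V = M)
    (U U' U'' : ℝ → (V →L[ℂ] V))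
    (hunit : ∀ x, U x ∈ unitary (V →L[ℂ] V))
    (hU' : ∀ x, HasDerivAt U (U' x) x)
    (hU'' : ∀ x, HasDerivAt U' (U'' x) x)
    (D : ℝ → (V →L[ℂ] V))
    (hD : ∀ x, D x = Complex.I⁻¹ • (U' x ∘L star (U x)))
    (dmin d₂ : ℝ) (hdmin : 0 < dmin) (hd₂ : 0 < d₂)
    (hlower : ∀ x, ∀ φ : V, dmin * ‖φ‖ ^ 2 ≤ (⟪D x φ, φ⟫_ℂ).re)
    (hupper : ∀ x, ‖U'' x‖ ≤ d₂)
    (I : Set ℝ)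
    (hlen : ∀ a ∈ I, ∀ b ∈ I, |a - b| ≤ 2 * dmin / (d₂ * M))
    (S : Finset ℝ) (hS : ∀ x ∈ S, x ∈ I ∧ LinearMap.ker ((1 - U x : V →L[ℂ] V) : V →ₗ[ℂ] V) ≠ ⊥)
    (φ : ℝ → V) (hφ : ∀ x ∈ S, φ x ∈ LinearMap.ker ((1 - U x : V →L[ℂ] V) : V →ₗ[ℂ] V))
    (hsum : ∑ x ∈ S, φ x = 0) :
    ∀ x ∈ S, φ x = 0 := by
  refine eq_zero_of_sum_eq_zero_of_forall_card_le (fun T hTS hcard ψ hψ hψ0 hψsum => ?_) hφ hsum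
  simp only [mem_ker_one_sub_iff] at hψ
  by_contra hTne
  set L := 2 * dmin / (d₂ * M)
  have hL : 0 < L := by positivity
  have hdiam : ∀ p ∈ T, ∀ q ∈ T, |q - p| ≤ L := fun p hp q hq =>
    hlen q (hS q (hTS hq)).1 p (hS p (hTS hp)).1
  have hbound : ∀ p ∈ T, M * L * ‖ψ p‖ ≤ ∑ q ∈ T.erase p, |q - p| * ‖ψ q‖ := fun p hp => by
    have := mul_norm_le_sum_abs_sub_mul_norm hunit hU' hU'' hD hlower hupper hψ hψsum hp
    rw [show (M : ℝ) * L = 2 * dmin / d₂ by simp only [L]; field_simp, div_mul_eq_mul_div,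
      div_le_iff₀ hd₂]
    linarith
  have hw : ∀ p ∈ T, 0 < ‖ψ p‖ := fun p hp => norm_pos_iff.mpr (hψ0 p hp)
  have hlow : M + 1 ≤ T.card := by
    exact_mod_cast add_one_le_card_of_forall_mul_le_sum (Finset.nonempty_iff_ne_empty.mpr hTne)
      hw hL hdiam hbound
  have hup := card_le_two_of_forall_mul_le_sum hw hL hdiam hbound
    (by rw [← hdim]; exact_mod_cast hcard)
  have hM1 : M = 1 := by omega
  obtain ⟨p, q, hpq, rfl⟩ := Finset.card_eq_two.mp (show T.card = 2 by omega)
  have hψp : ψ p = -ψ q := eq_neg_of_add_eq_zero_left (by rwa [Finset.sum_pair hpq] at hψsum)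
  have hfar := lt_abs_sub_of_finrank_eq_one (hdim.trans hM1) hunit hU' hU'' hD hdmin hlower hupper
    (hψ0 p (by simp)) hpq (hψ p (by simp)) (by rw [hψp, map_neg, hψ q (by simp)])
  have := hdiam p (by simp) q (by simp)
  simp only [L, hM1, Nat.cast_one, mul_one] at this
  linarith

/-- **Independence of eigenspaces.** For a monotone unitary family with
`D(x) ≥ dmin > 0` and `‖U''(x)‖ ≤ d₂`, and an interval `I` of length at most
`2·dmin/(d₂·M)`, the spaces `W(x) = ker(I − U(x))`, `x ∈ I`, are linearly
independent. -/
theorem independence_of_eigenspaces_of_monotone_unitary_family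
    {V : Type*} [NormedAddCommGroup V] [InnerProductSpace ℂ V] [FiniteDimensional ℂ V]
    (M : ℕ) (hM : 1 ≤ M) (hdim : Module.finrank ℂ V = M)
    (U U' U'' : ℝ → (V →L[ℂ] V))
    (hunit : ∀ x, U x ∈ unitary (V →L[ℂ] V))
    (hanal : ∀ x, AnalyticAt ℝ U x)
    (hU' : ∀ x, HasDerivAt U (U' x) x)
    (hU'' : ∀ x, HasDerivAt U' (U'' x) x)
    (D : ℝ → (V →L[ℂ] V))
    (hD : ∀ x, D x = Complex.I⁻¹ • (U' x ∘L star (U x)))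
    (dmin d₂ : ℝ) (hdmin : 0 < dmin) (hd₂ : 0 < d₂)
    (hlower : ∀ x, ∀ φ : V, dmin * ‖φ‖ ^ 2 ≤ (⟪D x φ, φ⟫_ℂ).re)
    (hupper : ∀ x, ‖U'' x‖ ≤ d₂)
    (I : Set ℝ) (hIconn : I.OrdConnected)
    (hlen : ∀ a ∈ I, ∀ b ∈ I, |a - b| ≤ 2 * dmin / (d₂ * M))
    (S : Finset ℝ) (hS : ∀ x ∈ S, x ∈ I ∧ LinearMap.ker ((1 - U x : V →L[ℂ] V) : V →ₗ[ℂ] V) ≠ ⊥)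
    (φ : ℝ → V) (hφ : ∀ x ∈ S, φ x ∈ LinearMap.ker ((1 - U x : V →L[ℂ] V) : V →ₗ[ℂ] V))
    (hsum : ∑ x ∈ S, φ x = 0) :
    ∀ x ∈ S, φ x = 0 :=
  independence_of_eigenspaces_of_monotone_unitary_family_general M hM hdim U U' U'' hunit hU' hU'' D
    hD dmin d₂ hdmin hd₂ hlower hupper I hlen S hS φ hφ hsum
end

section
/- Let U be a twice continuously differentiable family of unitary operators on a finite-dimensional complex inner product space V with ‖U''(t)‖ ≤ d₂ for all t, and set D(x) := (1/i) U'(x) U(x)^{-1}. If φ ∈ ker(I − U(x)), ψ ∈ ker(I − U(y)) and x ≠ y, then |⟨D(x)φ, ψ⟩| ≤ (d₂/2)·|x − y|·‖φ‖·‖ψ‖. -/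
/-!
The function `g t = ⟪ψ, U t φ⟫` takes the value `⟪ψ, φ⟫` both at `x` (as `U x φ = φ`) and at `y`
(as `U y` is unitary and fixes `ψ`). Since `‖g''‖ ≤ d₂ ‖φ‖ ‖ψ‖`, Taylor's inequality of order one
between `x` and `y` forces `‖g' x‖ ≤ d₂ / 2 · |x - y| · ‖φ‖ ‖ψ‖`; and `g' x = ⟪ψ, U' x φ⟫` equals
`⟪D x φ, ψ⟫` up to conjugation and the unimodular factor `i⁻¹`, because `U x⋆ φ = φ`.
-/

open Set
open scoped InnerProductSpace

section Taylor

variable {E : Type*} [NormedAddCommGroup E] [NormedSpace ℝ E] {f f' f'' : ℝ → E} {C : ℝ}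

theorem norm_sub_sub_smul_deriv_le_of_le (hf : ∀ t, HasDerivAt f (f' t) t)
    (hf' : ∀ t, HasDerivAt f' (f'' t) t) (hC : ∀ t, ‖f'' t‖ ≤ C) {a b : ℝ} (hab : a ≤ b) :
    ‖f b - f a - (b - a) • f' a‖ ≤ C / 2 * (b - a) ^ 2 := by
  have hf'_lip : ∀ t ∈ Icc a b, ‖f' t - f' a‖ ≤ C * (t - a) :=
    norm_image_sub_le_of_norm_deriv_le_segment' (fun t _ => (hf' t).hasDerivWithinAt)
      fun t _ => hC t
  have hB : ∀ t, HasDerivAt (fun t => C / 2 * (t - a) ^ 2) (C * (t - a)) t := fun t =>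
    ((((hasDerivAt_id' t).sub_const a).fun_pow 2).const_mul (C / 2)).congr_deriv (by ring)
  have hrem (t : ℝ) : HasDerivAt (fun t => f t - f a - (t - a) • f' a) (f' t - f' a) t := by
    simpa using ((hf t).sub_const (f a)).fun_sub (((hasDerivAt_id t).sub_const a).smul_const (f' a))
  -- the remainder vanishes at `a`, and its derivative is dominated by that of `C / 2 * (t - a) ^ 2`
  exact image_norm_le_of_norm_deriv_right_le_deriv_boundary
    (fun t _ => (hrem t).continuousAt.continuousWithinAt) (fun t _ => (hrem t).hasDerivWithinAt)
    (by simp) hB (fun t ht => hf'_lip t (Ico_subset_Icc_self ht)) ⟨hab, le_rfl⟩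

theorem norm_sub_sub_smul_deriv_le (hf : ∀ t, HasDerivAt f (f' t) t)
    (hf' : ∀ t, HasDerivAt f' (f'' t) t) (hC : ∀ t, ‖f'' t‖ ≤ C) (a b : ℝ) :
    ‖f b - f a - (b - a) • f' a‖ ≤ C / 2 * (b - a) ^ 2 := by
  rcases le_total a b with hab | hba
  · exact norm_sub_sub_smul_deriv_le_of_le hf hf' hC hab
  · have hneg (t : ℝ) : HasDerivAt (fun s : ℝ => -s) (-1) t := hasDerivAt_neg' t
    have hreflect := norm_sub_sub_smul_deriv_le_of_le (f := fun t => f (-t))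
      (f' := fun t => -f' (-t)) (f'' := fun t => f'' (-t))
      (fun t => by simpa [Function.comp_def] using (hf (-t)).scomp t (hneg t))
      (fun t => by simpa [Function.comp_def] using ((hf' (-t)).scomp t (hneg t)).fun_neg)
      (fun t => hC (-t)) (neg_le_neg hba)
    simp only [neg_neg] at hreflect
    convert hreflect using 2
    · rw [smul_neg, ← neg_smul]; congr 2; ring
    · ring

theorem norm_deriv_le_of_apply_eq (hf : ∀ t, HasDerivAt f (f' t) t)
    (hf' : ∀ t, HasDerivAt f' (f'' t) t) (hC : ∀ t, ‖f'' t‖ ≤ C) {a b : ℝ} (hab : a ≠ b)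
    (hfab : f a = f b) : ‖f' a‖ ≤ C / 2 * |b - a| := by
  have hpos : 0 < |b - a| := abs_pos.mpr (sub_ne_zero.mpr hab.symm)
  have := norm_sub_sub_smul_deriv_le hf hf' hC a b
  rw [hfab, sub_self, zero_sub, norm_neg, norm_smul, Real.norm_eq_abs, ← sq_abs] at this
  nlinarith

end Taylor

section Operator

variable {V : Type*} [NormedAddCommGroup V] [InnerProductSpace ℂ V]

theorem HasDerivAt.inner_apply {A : ℝ → V →L[ℂ] V} {A' : V →L[ℂ] V} {t : ℝ}
    (hA : HasDerivAt A A' t) (φ ψ : V) :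
    HasDerivAt (fun s => ⟪ψ, A s φ⟫_ℂ) ⟪ψ, A' φ⟫_ℂ t :=
  (((innerSL ℂ ψ).comp (ContinuousLinearMap.apply ℂ V φ)).restrictScalars ℝ).hasFDerivAt
    |>.comp_hasDerivAt t hA

theorem star_apply_eq_self_of_mem_unitary [CompleteSpace V] {u : V →L[ℂ] V}
    (hu : u ∈ unitary (V →L[ℂ] V)) {v : V} (hv : u v = v) : star u v = v := by
  conv_lhs => rw [← hv]
  exact DFunLike.congr_fun (Unitary.star_mul_self_of_mem hu) v

theorem apply_eq_self_of_mem_ker_one_sub {u : V →L[ℂ] V} {v : V}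
    (hv : v ∈ LinearMap.ker ((1 - u : V →L[ℂ] V) : V →ₗ[ℂ] V)) : u v = v :=
  (sub_eq_zero.mp (by simpa using hv)).symm

end Operator

theorem monotone_unitary_almost_orthogonal_general
    {V : Type*} [NormedAddCommGroup V] [InnerProductSpace ℂ V] [FiniteDimensional ℂ V]
    (U U' U'' : ℝ → (V →L[ℂ] V)) (d₂ : ℝ)
    (hunit : ∀ x, U x ∈ unitary (V →L[ℂ] V))
    (hU' : ∀ x, HasDerivAt U (U' x) x)
    (hU'' : ∀ x, HasDerivAt U' (U'' x) x)
    (hd₂ : ∀ t, ‖U'' t‖ ≤ d₂)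
    (D : ℝ → (V →L[ℂ] V))
    (hD : ∀ x, D x = Complex.I⁻¹ • (U' x ∘L star (U x)))
    (x y : ℝ) (hxy : x ≠ y) (φ ψ : V)
    (hφ : φ ∈ LinearMap.ker ((1 - U x : V →L[ℂ] V) : V →ₗ[ℂ] V)) (hψ : ψ ∈ LinearMap.ker ((1 - U y : V →L[ℂ] V) : V →ₗ[ℂ] V)) :
    ‖⟪D x φ, ψ⟫_ℂ‖ ≤ d₂ / 2 * |x - y| * ‖φ‖ * ‖ψ‖ := by
  have hφ : U x φ = φ := apply_eq_self_of_mem_ker_one_sub hφ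
  have hψ : U y ψ = ψ := apply_eq_self_of_mem_ker_one_sub hψ
  have hg : ⟪ψ, U x φ⟫_ℂ = ⟪ψ, U y φ⟫_ℂ := by
    rw [hφ, ← ContinuousLinearMap.inner_map_map_of_mem_unitary (hunit y), hψ]
  have hg''_le : ∀ t, ‖⟪ψ, U'' t φ⟫_ℂ‖ ≤ d₂ * ‖φ‖ * ‖ψ‖ := fun t =>
    calc ‖⟪ψ, U'' t φ⟫_ℂ‖ ≤ ‖ψ‖ * (‖U'' t‖ * ‖φ‖) :=
          (norm_inner_le_norm _ _).trans (by gcongr; exact (U'' t).le_opNorm φ)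
      _ ≤ ‖ψ‖ * (d₂ * ‖φ‖) := by gcongr; exact hd₂ t
      _ = d₂ * ‖φ‖ * ‖ψ‖ := by ring
  have hg'_le := norm_deriv_le_of_apply_eq (fun t => (hU' t).inner_apply φ ψ)
    (fun t => (hU'' t).inner_apply φ ψ) hg''_le hxy hg
  have hDφ : D x φ = Complex.I⁻¹ • U' x φ := by
    simp [hD, star_apply_eq_self_of_mem_unitary (hunit x) hφ]
  calc ‖⟪D x φ, ψ⟫_ℂ‖ = ‖⟪ψ, U' x φ⟫_ℂ‖ := by
        rw [← norm_inner_symm, hDφ, inner_smul_right, norm_mul, norm_inv, Complex.norm_I,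
          inv_one, one_mul]
    _ ≤ d₂ * ‖φ‖ * ‖ψ‖ / 2 * |y - x| := hg'_le
    _ = d₂ / 2 * |x - y| * ‖φ‖ * ‖ψ‖ := by rw [abs_sub_comm]; ring

/-- **Lemma (almost orthogonality).** If `U` is a twice continuously differentiable
family of unitary operators with `‖U''(t)‖ ≤ d₂` and `D(x) = (1/i) U'(x) U(x)⁻¹`,
then for `φ ∈ ker(I - U(x))`, `ψ ∈ ker(I - U(y))`, `x ≠ y` one has
`|⟨D(x)φ, ψ⟩| ≤ (d₂/2)·|x - y|·‖φ‖·‖ψ‖`. -/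
theorem monotone_unitary_almost_orthogonal
    {V : Type*} [NormedAddCommGroup V] [InnerProductSpace ℂ V] [FiniteDimensional ℂ V]
    (U U' U'' : ℝ → (V →L[ℂ] V)) (d₂ : ℝ)
    (hunit : ∀ x, U x ∈ unitary (V →L[ℂ] V))
    (hU' : ∀ x, HasDerivAt U (U' x) x)
    (hU'' : ∀ x, HasDerivAt U' (U'' x) x)
    (hU''cont : Continuous U'')
    (hd₂ : ∀ t, ‖U'' t‖ ≤ d₂)
    (D : ℝ → (V →L[ℂ] V))
    (hD : ∀ x, D x = Complex.I⁻¹ • (U' x ∘L star (U x)))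
    (x y : ℝ) (hxy : x ≠ y) (φ ψ : V)
    (hφ : φ ∈ LinearMap.ker ((1 - U x : V →L[ℂ] V) : V →ₗ[ℂ] V)) (hψ : ψ ∈ LinearMap.ker ((1 - U y : V →L[ℂ] V) : V →ₗ[ℂ] V)) :
    ‖⟪D x φ, ψ⟫_ℂ‖ ≤ d₂ / 2 * |x - y| * ‖φ‖ * ‖ψ‖ :=
  monotone_unitary_almost_orthogonal_general U U' U'' d₂ hunit hU' hU'' hd₂ D hD x y hxy φ ψ hφ hψ
end

section
/- Let x ↦ A(x) be a continuously differentiable family of self-adjoint operators on a finite-dimensional complex inner product space V, and set U(x) = e^{iA(x)}. Then for every x, (1/i) U'(x) U(x)^{-1} = ∫_0^1 e^{iτA(x)} A'(x) e^{−iτA(x)} dτ. -/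
/-!
Duhamel's formula `e^P e^{-Q} - 1 = ∫₀¹ e^{τP} (P - Q) e^{-τQ} dτ`, the fundamental theorem of
calculus for `τ ↦ e^{τP} e^{-τQ}`, writes the difference quotient of `y ↦ e^{B(y)}` at `x` as the
same integral with `P - Q` replaced by the difference quotient of `B`, times `e^{B(x)}`. That
integral is jointly continuous in its two arguments, so letting `y → x` gives
`U'(x) U(x)⁻¹ = ∫₀¹ e^{τB(x)} B'(x) e^{-τB(x)} dτ` for `B = iA`, with no commutativity needed.
-/

open NormedSpace Filter Topology

section ExpDerivative

variable {𝔸 : Type*} [NormedRing 𝔸] [NormedAlgebra ℝ 𝔸] [CompleteSpace 𝔸]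

theorem exp_mul_exp_neg (P : 𝔸) : exp P * exp (-P) = 1 := by
  let +nondep : NormedAlgebra ℚ 𝔸 := .restrictScalars ℚ ℝ 𝔸
  rw [← exp_add_of_commute (Commute.refl P).neg_right, add_neg_cancel, exp_zero]

theorem exp_mul_exp_neg_sub_one_eq_integral (P Q : 𝔸) :
    exp P * exp (-Q) - 1 = ∫ τ in (0:ℝ)..1, exp (τ • P) * (P - Q) * exp (-(τ • Q)) := by
  let +nondep : NormedAlgebra ℚ 𝔸 := .restrictScalars ℚ ℝ 𝔸
  have hderiv (τ : ℝ) : HasDerivAt (fun t : ℝ => exp (t • P) * exp (t • -Q))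
      (exp (τ • P) * (P - Q) * exp (-(τ • Q))) τ := by
    refine ((hasDerivAt_exp_smul_const P τ).mul (hasDerivAt_exp_smul_const' (-Q) τ)).congr_deriv ?_
    rw [smul_neg]
    noncomm_ring
  have hcont : Continuous fun τ : ℝ => exp (τ • P) * (P - Q) * exp (-(τ • Q)) := by fun_prop
  rw [intervalIntegral.integral_eq_sub_of_hasDerivAt (fun τ _ => hderiv τ)
    (hcont.intervalIntegrable 0 1)]
  simp

theorem continuous_integral_exp_smul_mul_mul_exp_neg_smul (Q : 𝔸) :
    Continuous fun p : 𝔸 × 𝔸 => ∫ τ in (0:ℝ)..1, exp (τ • p.1) * p.2 * exp (-(τ • Q)) := by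
  let +nondep : NormedAlgebra ℚ 𝔸 := .restrictScalars ℚ ℝ 𝔸
  apply intervalIntegral.continuous_parametric_intervalIntegral_of_continuous'
  fun_prop

theorem hasDerivAt_exp_comp {B : ℝ → 𝔸} {B' : 𝔸} {x : ℝ} (hB : HasDerivAt B B' x) :
    HasDerivAt (fun y => exp (B y))
      ((∫ τ in (0:ℝ)..1, exp (τ • B x) * B' * exp (-(τ • B x))) * exp (B x)) x := by
  set G : ℝ → 𝔸 := fun y =>
    (∫ τ in (0:ℝ)..1, exp (τ • B y) * dslope B x y * exp (-(τ • B x))) * exp (B x)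
  have hG : ContinuousAt G x :=
    (((continuous_integral_exp_smul_mul_mul_exp_neg_smul (B x)).continuousAt.comp
      (hB.continuousAt.prodMk (continuousAt_dslope_same.mpr hB.differentiableAt))).mul
      continuousAt_const)
  have hGx : G x = (∫ τ in (0:ℝ)..1, exp (τ • B x) * B' * exp (-(τ • B x))) * exp (B x) := by
    simp only [G, dslope_same, hB.deriv]
  have hslope : ∀ y ≠ x, slope (fun y => exp (B y)) x y = G y := by
    intro y hy
    have hinv : exp (-B x) * exp (B x) = 1 := by simpa using exp_mul_exp_neg (-B x)
    have hsub : exp (B y) - exp (B x) = (exp (B y) * exp (-B x) - 1) * exp (B x) := by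
      rw [sub_mul, mul_assoc, hinv, mul_one, one_mul]
    rw [slope_def_module, hsub, exp_mul_exp_neg_sub_one_eq_integral, ← smul_mul_assoc,
      ← intervalIntegral.integral_smul]
    simp only [G, dslope_of_ne _ hy, slope_def_module, smul_mul_assoc, mul_smul_comm]
  rw [hasDerivAt_iff_tendsto_slope, ← hGx]
  exact (hG.tendsto.mono_left nhdsWithin_le_nhds).congr'
    (eventually_nhdsWithin_of_forall fun y hy => (hslope y hy).symm)

end ExpDerivative

theorem deriv_exp_selfadjoint_family_general
    {V : Type*} [NormedAddCommGroup V] [InnerProductSpace ℂ V] [FiniteDimensional ℂ V]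
    (A A' : ℝ → (V →L[ℂ] V))
    (hA' : ∀ x, HasDerivAt A (A' x) x)
    (U : ℝ → (V →L[ℂ] V))
    (hU : ∀ x, U x = NormedSpace.exp (Complex.I • A x))
    (x : ℝ) :
    Complex.I⁻¹ • (deriv U x ∘L NormedSpace.exp (-(Complex.I • A x))) =
      ∫ τ in (0:ℝ)..1,
        NormedSpace.exp (((τ : ℂ) * Complex.I) • A x) ∘L A' x ∘L
          NormedSpace.exp (-(((τ : ℂ) * Complex.I) • A x)) := by
  have hIA : HasDerivAt (fun y => Complex.I • A y) (Complex.I • A' x) x :=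
    (hA' x).const_smul Complex.I
  have hU' := hasDerivAt_exp_comp hIA
  rw [← funext hU] at hU'
  rw [hU'.deriv, ← ContinuousLinearMap.mul_def, mul_assoc, exp_mul_exp_neg, mul_one,
    ← intervalIntegral.integral_smul]
  congr 1 with τ : 1
  have hτ : τ • Complex.I • A x = ((τ : ℂ) * Complex.I) • A x := by
    rw [← smul_smul, Complex.coe_smul]
  rw [hτ, mul_smul_comm, smul_mul_assoc, smul_smul, inv_mul_cancel₀ Complex.I_ne_zero, one_smul,
    ContinuousLinearMap.mul_def, ContinuousLinearMap.mul_def, ContinuousLinearMap.comp_assoc]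

/-- **Proposition.** If `A(x)` is a `C¹` family of self-adjoint operators and
`U(x) = e^{iA(x)}`, then `(1/i)U'(x)U(x)⁻¹ = ∫_0^1 e^{iτA(x)} A'(x) e^{−iτA(x)} dτ`. -/
theorem deriv_exp_selfadjoint_family
    {V : Type*} [NormedAddCommGroup V] [InnerProductSpace ℂ V] [FiniteDimensional ℂ V]
    (A A' : ℝ → (V →L[ℂ] V))
    (hsa : ∀ x, IsSelfAdjoint (A x))
    (hA' : ∀ x, HasDerivAt A (A' x) x)
    (hA'cont : Continuous A')
    (U : ℝ → (V →L[ℂ] V))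
    (hU : ∀ x, U x = NormedSpace.exp (Complex.I • A x))
    (x : ℝ) :
    Complex.I⁻¹ • (deriv U x ∘L NormedSpace.exp (-(Complex.I • A x))) =
      ∫ τ in (0:ℝ)..1,
        NormedSpace.exp (((τ : ℂ) * Complex.I) • A x) ∘L A' x ∘L
          NormedSpace.exp (-(((τ : ℂ) * Complex.I) • A x)) :=
  deriv_exp_selfadjoint_family_general A A' hA' U hU x
end

section
/- Let V be a finite-dimensional complex inner product space, V = V₀ ⊕ V₁ an orthogonal direct sum decomposition, U a unitary operator on V, and W = U − I. Write W in block form W_{kl} : V_l → V_k (k,l ∈ {0,1}) with respect to this decomposition, and assume W₁₁ is invertible. Set W' := W₀₀ − W₀₁ W₁₁^{-1} W₁₀. Then: (a) for v₀ ∈ V₀ and v₁ ∈ V₁, W(v₀ ⊕ v₁) = 0 if and only if W'v₀ = 0 and v₁ = −W₁₁^{-1} W₁₀ v₀; in particular U has eigenvalue one if and only if the operator U' := I_{V₀} + W' on V₀ has eigenvalue one; and (b) U' is unitary on V₀. -/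
/-!
Splitting `W (v₀ + v₁) = 0` into its `V₀`- and `V₁`-components gives the block system
`W₀₀ v₀ + W₀₁ v₁ = 0`, `W₁₀ v₀ + W₁₁ v₁ = 0`; eliminating `v₁ = -W₁₁⁻¹ W₁₀ v₀` leaves the Schur
complement equation `W' v₀ = 0`. For that choice of `v₁` the `V₁`-component of `W (v₀ + v₁)`
vanishes, so `U (v₀ + v₁) = U' v₀ + v₁`; Pythagoras and `‖U (v₀ + v₁)‖ = ‖v₀ + v₁‖` give
`‖U' v₀‖ = ‖v₀‖`, and an isometry of a finite-dimensional space is unitary.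
-/

open ContinuousLinearMap

section SchurComplement

variable {M N₀ N₁ F G : Type*} [AddCommGroup M] [AddCommGroup N₀] [AddCommGroup N₁]
  [FunLike F M N₀] [AddMonoidHomClass F M N₀] [FunLike G M N₁] [AddMonoidHomClass G M N₁]
  {d : G} {dinv : N₁ → M}

theorem add_map_neg_eq_zero_of_rightInverse (hd : Function.RightInverse dinv d) (q : N₁) :
    q + d (-dinv q) = 0 := by
  rw [map_neg, hd q, add_neg_cancel]

theorem add_map_eq_zero_and_add_map_eq_zero_iff (b : F) (hd : Function.RightInverse dinv d)
    (hd' : Function.LeftInverse dinv d) (p : N₀) (q : N₁) (y : M) :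
    p + b y = 0 ∧ q + d y = 0 ↔ p - b (dinv q) = 0 ∧ y = -dinv q := by
  constructor
  · rintro ⟨h₀, h₁⟩
    have hy : y = -dinv q := hd'.injective <| by
      rw [eq_neg_of_add_eq_zero_right h₁, map_neg, hd q]
    rw [hy, map_neg, ← sub_eq_add_neg] at h₀
    exact ⟨h₀, hy⟩
  · rintro ⟨h, rfl⟩
    exact ⟨by rwa [map_neg, ← sub_eq_add_neg], add_map_neg_eq_zero_of_rightInverse hd q⟩

end SchurComplement

namespace Submodule

variable {𝕜 E : Type*} [RCLike 𝕜] [NormedAddCommGroup E] [InnerProductSpace 𝕜 E] (K : Submodule 𝕜 E)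

theorem coe_add_coe_orthogonal_eq_zero_iff {x : K} {y : Kᗮ} :
    (x : E) + y = 0 ↔ x = 0 ∧ y = 0 := by
  refine ⟨fun h => ?_, fun ⟨hx, hy⟩ => by simp [hx, hy]⟩
  have hx : (x : E) ∈ K ⊓ Kᗮ := ⟨x.2, eq_neg_of_add_eq_zero_left h ▸ neg_mem y.2⟩
  rw [K.inf_orthogonal_eq_bot, mem_bot] at hx
  rw [hx, zero_add] at h
  exact ⟨by exact_mod_cast hx, by exact_mod_cast h⟩

theorem norm_eq_of_norm_add_orthogonal_eq {x x' : K} (y : Kᗮ)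
    (h : ‖(x : E) + y‖ = ‖(x' : E) + y‖) : ‖x‖ = ‖x'‖ := by
  have pythagoras (z : K) : ‖(z : E) + y‖ * ‖(z : E) + y‖ = ‖z‖ * ‖z‖ + ‖y‖ * ‖y‖ :=
    norm_add_sq_eq_norm_sq_add_norm_sq_of_inner_eq_zero _ _
      (K.inner_right_of_mem_orthogonal z.2 y.2)
  have := pythagoras x
  rw [h, pythagoras x', add_left_inj] at this
  exact (mul_self_inj (norm_nonneg _) (norm_nonneg _)).1 this.symm

variable [K.HasOrthogonalProjection]

theorem coe_orthogonalProjectionOnto_add_orthogonal (x : E) :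
    (K.orthogonalProjectionOnto x : E) + Kᗮ.orthogonalProjectionOnto x = x :=
  K.starProjection_add_starProjection_orthogonal x

theorem exists_ne_zero_iff_of_forall_coe_add_iff {p : E → Prop} {q : K → Prop} {S : K → Kᗮ}
    (hS : S 0 = 0) (h : ∀ (x : K) (y : Kᗮ), p (x + y) ↔ q x ∧ y = S x) :
    (∃ v, v ≠ 0 ∧ p v) ↔ ∃ x, x ≠ 0 ∧ q x := by
  constructor
  · rintro ⟨v, hv, hp⟩
    rw [← K.coe_orthogonalProjectionOnto_add_orthogonal v] at hv hp
    obtain ⟨hq, hy⟩ := (h _ _).1 hp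
    refine ⟨_, fun hx => hv ?_, hq⟩
    rw [hy, hx, hS]
    simp
  · rintro ⟨x, hx, hq⟩
    exact ⟨x + S x, fun h0 => hx (K.coe_add_coe_orthogonal_eq_zero_iff.1 h0).1,
      (h _ _).2 ⟨hq, rfl⟩⟩

end Submodule

theorem ContinuousLinearMap.mem_unitary_of_norm_map {𝕜 H : Type*} [RCLike 𝕜]
    [NormedAddCommGroup H] [InnerProductSpace 𝕜 H] [CompleteSpace H] [FiniteDimensional 𝕜 H]
    {u : H →L[𝕜] H} (hu : ∀ x, ‖u x‖ = ‖x‖) :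
    u ∈ unitary (H →L[𝕜] H) := by
  have hinj : Function.Injective u := ((AddMonoidHomClass.isometry_iff_norm u).2 hu).injective
  have hunit : IsUnit u := isUnit_iff_isUnit_toLinearMap.2 <|
    (Module.End.isUnit_iff _).2 ⟨hinj, LinearMap.surjective_of_injective hinj⟩
  exact hunit.mem_unitary_of_star_mul_self ((norm_map_iff_adjoint_comp_self u).1 hu)

/-- **Block reduction.** Let `V = V₀ ⊕ V₁` orthogonally, `U` unitary, `W = U − I`,
with blocks `W_{kl}` and `W₁₁` invertible. With `W' = W₀₀ − W₀₁W₁₁⁻¹W₁₀`: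
(a) `W(v₀ ⊕ v₁) = 0 ↔ (W'v₀ = 0 ∧ v₁ = −W₁₁⁻¹W₁₀v₀)`; in particular `U` has
eigenvalue one iff `U' = I + W'` has eigenvalue one; and (b) `U'` is unitary on `V₀`. -/
theorem unitary_block_reduction
    {V : Type*} [NormedAddCommGroup V] [InnerProductSpace ℂ V] [FiniteDimensional ℂ V]
    (V₀ V₁ : Submodule ℂ V) (horth : V₁ = V₀ᗮ)
    (U : V →L[ℂ] V) (hU : U ∈ unitary (V →L[ℂ] V))
    (W : V →L[ℂ] V) (hW : W = U - 1)
    (W₀₀ : V₀ →L[ℂ] V₀) (W₀₁ : V₁ →L[ℂ] V₀)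
    (W₁₀ : V₀ →L[ℂ] V₁) (W₁₁ : V₁ →L[ℂ] V₁)
    (hW₀₀ : W₀₀ = V₀.orthogonalProjectionOnto ∘L W ∘L V₀.subtypeL)
    (hW₀₁ : W₀₁ = V₀.orthogonalProjectionOnto ∘L W ∘L V₁.subtypeL)
    (hW₁₀ : W₁₀ = V₁.orthogonalProjectionOnto ∘L W ∘L V₀.subtypeL)
    (hW₁₁ : W₁₁ = V₁.orthogonalProjectionOnto ∘L W ∘L V₁.subtypeL)
    (W₁₁inv : V₁ →L[ℂ] V₁)
    (hinv : W₁₁ ∘L W₁₁inv = 1 ∧ W₁₁inv ∘L W₁₁ = 1)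
    (W' : V₀ →L[ℂ] V₀)
    (hW' : W' = W₀₀ - W₀₁ ∘L W₁₁inv ∘L W₁₀) :
    (∀ (v₀ : V₀) (v₁ : V₁),
        (W ((v₀ : V) + (v₁ : V)) = 0 ↔ W' v₀ = 0 ∧ v₁ = -(W₁₁inv (W₁₀ v₀)))) ∧
    ((∃ v : V, v ≠ 0 ∧ U v = v) ↔ (∃ v₀ : V₀, v₀ ≠ 0 ∧ (1 + W') v₀ = v₀)) ∧
    (1 + W') ∈ unitary (V₀ →L[ℂ] V₀) := by
  subst horth
  have hsplit (v₀ : V₀) (v₁ : V₀ᗮ) : W (v₀ + v₁) = ↑(W₀₀ v₀ + W₀₁ v₁) + ↑(W₁₀ v₀ + W₁₁ v₁) := by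
    rw [← V₀.coe_orthogonalProjectionOnto_add_orthogonal (W _)]
    simp only [hW₀₀, hW₀₁, hW₁₀, hW₁₁, comp_apply, Submodule.subtypeL_apply, map_add]
  have hright : Function.RightInverse W₁₁inv W₁₁ := fun y => congr($(hinv.1) y)
  have hleft : Function.LeftInverse W₁₁inv W₁₁ := fun y => congr($(hinv.2) y)
  have hW'_apply (v₀ : V₀) : W' v₀ = W₀₀ v₀ - W₀₁ (W₁₁inv (W₁₀ v₀)) := by simp [hW']
  have hker (v₀ : V₀) (v₁ : V₀ᗮ) :
      W (v₀ + v₁) = 0 ↔ W' v₀ = 0 ∧ v₁ = -(W₁₁inv (W₁₀ v₀)) := by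
    rw [hsplit, V₀.coe_add_coe_orthogonal_eq_zero_iff, hW'_apply,
      add_map_eq_zero_and_add_map_eq_zero_iff W₀₁ hright hleft]
  have hU_eq (v : V) : U v = v + W v := by
    rw [hW, sub_apply, one_apply_eq_self, add_sub_cancel]
  refine ⟨hker, V₀.exists_ne_zero_iff_of_forall_coe_add_iff (S := fun v₀ => -(W₁₁inv (W₁₀ v₀)))
    (by simp) fun v₀ v₁ => ?_, ?_⟩
  · simpa [hU_eq] using hker v₀ v₁
  refine mem_unitary_of_norm_map fun v₀ => ?_
  obtain ⟨v₁, hv₁⟩ : ∃ v₁ : V₀ᗮ, v₁ = -(W₁₁inv (W₁₀ v₀)) := ⟨_, rfl⟩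
  have hW_apply : W (v₀ + v₁) = W' v₀ := by
    rw [hsplit, hv₁, add_map_neg_eq_zero_of_rightInverse hright, hW'_apply, map_neg,
      sub_eq_add_neg, ZeroMemClass.coe_zero, add_zero]
  have hUv : U (v₀ + v₁) = ↑((1 + W') v₀) + v₁ := by
    rw [hU_eq, hW_apply, add_apply, one_apply_eq_self, Submodule.coe_add]
    abel
  apply V₀.norm_eq_of_norm_add_orthogonal_eq v₁
  rw [← hUv, norm_map_of_mem_unitary hU]
end
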